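/- Let 𝒜 be the A∞-category of the 4-punctured sphere and let M be a peculiar module (curved type D structure over 𝒜∂ with curvature p⁴+q⁴). Then the twisted complex 𝓛(M) = ⊕_{j=1}^4 (ι_j·𝒜∂_op ⊗ M) ⊗ L_j with structure map δ(b ⊗ m ⊗ L_j) = b·∂_M(m) ⊗ id_{L_j} + p·b ⊗ m ⊗ u_{j,j+1} + q·b ⊗ m ⊗ v_{j,j−1} satisfies the twisted-complex Maurer–Cartan equation: μ^tw₁ applied to δ vanishes. -/

import Mathlib

/-!
**Statement 15.** Let `𝒜` be the A∞-category of the 4-punctured sphere and let `M` be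
a peculiar module (a curved type D structure over the peculiar algebra `𝒜∂` with
curvature `p⁴ + q⁴`).  Then the twisted complex
`𝓛(M) = ⊕_{j=1}^4 (ι_j·𝒜∂ᵒᵖ ⊗_ℐ M) ⊗ L_j` with structure map
`δ(b ⊗ m ⊗ L_j) = b·∂_M(m) ⊗ id_{L_j} + p·b ⊗ m ⊗ u_{j,j+1} + q·b ⊗ m ⊗ v_{j,j−1}`
satisfies the twisted-complex Maurer–Cartan equation `∑_{k≥1} μ_k(δ, …, δ) = 0`.

Everything is encoded basis-theoretically.  The A∞-category `𝒜` is as in statements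
13/14 (`IsMu` below).  The basis of `𝒜∂` consists of paths `(s, d) : PathB`
(start `s ∈ ℤ/4` and signed length `d`: `d ≥ 0` a `q`-path, `d ≤ 0` a `p`-path),
with partial product `mulP`; `𝒜∂ᵒᵖ`-basis elements `(a)⁻¹` are encoded by the same
paths, and the module actions are the partial division actions: `frontAct` is
`(a)⁻¹ · dc` (removing a coefficient of `∂_M` from the front of `a`), and
`backP`/`backQ` are `p·(a)⁻¹` and `q·(a)⁻¹` (removing a single `p` / `q` from the
back of `a`).  The peculiar module `M` is given by a finite generating set `G` with
idempotents `idem` and differential coefficients `d : G → G → 𝒜∂`, with curvature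
`∂_M² = (p⁴ + q⁴) ⊗ 1` (`hcurv`).  The generators of `𝓛(M)` are pairs
`(a, x) : PathB × G` (with `a` starting at `idem x`), and `deltaRow` lists the matrix
entries of its structure map `δ`.  The Maurer–Cartan sum `∑_{k≥1} μ_k(δ,…,δ)`,
evaluated entrywise from a generator `gg` to a generator `gg'`, is
`∑_k MCterm k gg gg'` (a sum over chains of entries of `δ`); it is eventually
constant, and the Maurer–Cartan equation says that it vanishes: for every `N ≥ 4`,
`∑_{k=1}^N MCterm k gg gg' = 0`.
-/

namespace Stmt15

/-! ### The A∞-category `𝒜` of the 4-punctured sphere (as in statements 13/14) -/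

inductive B : Type
  | endo : ZMod 4 → ℤ → B
  | uu : ZMod 4 → ℕ → B
  | vv : ZMod 4 → ℕ → B
deriving DecidableEq

def mu2 : B → B → Option B
  | .endo i a, .endo j b => if j = i ∧ 0 ≤ a * b then some (.endo i (a + b)) else none
  | .endo i a, .uu j k => if j = i ∧ a ≤ 0 then some (.uu i (k + a.natAbs)) else none
  | .endo i a, .vv j k => if j = i ∧ 0 ≤ a then some (.vv i (k + a.natAbs)) else none
  | .uu i k, .endo j b => if j = i + 1 ∧ 0 ≤ b then some (.uu i (k + b.natAbs)) else none
  | .uu i k, .vv j l => if j = i + 1 then some (.endo i (-(k + l + 1 : ℤ))) else none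
  | .uu _ _, .uu _ _ => none
  | .vv i k, .endo j b => if j = i - 1 ∧ b ≤ 0 then some (.vv i (k + b.natAbs)) else none
  | .vv i k, .uu j l => if j = i - 1 then some (.endo i ((k : ℤ) + l + 1)) else none
  | .vv _ _, .vv _ _ => none

abbrev H := B →₀ ZMod 2

noncomputable def toH : Option B → H
  | some b => Finsupp.single b 1
  | none => 0

def uLoop (i : ZMod 4) (k : ℕ) : List B :=
  List.ofFn fun t : Fin k => B.uu (i + ((t : ℕ) : ZMod 4)) 0

def vLoop (i : ZMod 4) (k : ℕ) : List B :=
  List.ofFn fun t : Fin k => B.vv (i - ((t : ℕ) : ZMod 4)) 0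

/-- `mu` is the family of A∞-operations of the category `𝒜` -/
structure IsMu (mu : List B → Option B) : Prop where
  binary : ∀ a b : B, mu [a, b] = mu2 a b
  expand_u : ∀ (pre post : List B) (a b ca cb : B) (i : ZMod 4),
      mu2 a (.uu i 0) = some ca → mu2 (.uu (i - 1) 0) b = some cb →
      mu (pre ++ [ca] ++ uLoop (i + 1) 2 ++ [cb] ++ post)
        = mu (pre ++ [a, b] ++ post)
  expand_v : ∀ (pre post : List B) (a b ca cb : B) (i : ZMod 4),
      mu2 a (.vv i 0) = some ca → mu2 (.vv (i + 1) 0) b = some cb →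
      mu (pre ++ [ca] ++ vLoop (i - 1) 2 ++ [cb] ++ post)
        = mu (pre ++ [a, b] ++ post)
  vanish : ∀ l : List B, l.length ≠ 2 → mu l ≠ none →
      ∃ (pre post : List B) (a b ca cb : B) (i : ZMod 4),
        ((mu2 a (.uu i 0) = some ca ∧ mu2 (.uu (i - 1) 0) b = some cb ∧
            l = pre ++ [ca] ++ uLoop (i + 1) 2 ++ [cb] ++ post) ∨
         (mu2 a (.vv i 0) = some ca ∧ mu2 (.vv (i + 1) 0) b = some cb ∧
            l = pre ++ [ca] ++ vLoop (i - 1) 2 ++ [cb] ++ post)) ∧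
        mu l = mu (pre ++ [a, b] ++ post)

/-! ### The peculiar algebra `𝒜∂`, its opposite, and the division actions -/

/-- basis paths of `𝒜∂`: `(s, d)` starts at vertex `s` and has signed length `d`
(`d ≥ 0`: the `q`-path from `s` to `s + d`; `d ≤ 0`: the `p`-path from `s` to
`s + d`) -/
abbrev PathB := ZMod 4 × ℤ

/-- the end vertex of a path -/
def endV (a : PathB) : ZMod 4 := a.1 + (a.2 : ZMod 4)

/-- concatenation of basis paths (the product of `𝒜∂`); `none` = 0.  The relations
`p_i q_i = 0 = q_i p_i` mean that only likewise-oriented paths compose. -/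
def mulP (a b : PathB) : Option PathB :=
  if b.1 = endV a ∧ 0 ≤ a.2 * b.2 then some (a.1, a.2 + b.2) else none

/-- elements of `𝒜∂` (formal 𝔽₂-combinations of basis paths) -/
abbrev AP := PathB →₀ ZMod 2

noncomputable def toAP : Option PathB → AP
  | some a => Finsupp.single a 1
  | none => 0

/-- the product of `𝒜∂` -/
noncomputable def mulAP (f g : AP) : AP :=
  f.sum fun a c => g.sum fun b c' => (c * c') • toAP (mulP a b)

/-- the action `(a)⁻¹ · dc` of a path `dc ∈ 𝒜∂` on `(a)⁻¹ ∈ 𝒜∂ᵒᵖ`: remove `dc`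
from the front of `a`, i.e. `(a)⁻¹ · dc = (c)⁻¹` if `a = dc ⬝ c` (else 0) -/
def frontAct (a dc : PathB) : Option PathB :=
  if dc.1 = a.1 ∧ (0 ≤ dc.2 ∧ dc.2 ≤ a.2 ∨ a.2 ≤ dc.2 ∧ dc.2 ≤ 0)
  then some (a.1 + (dc.2 : ZMod 4), a.2 - dc.2) else none

/-- the action `p · (a)⁻¹`: remove a single `p` from the back of `a` -/
def backP (a : PathB) : Option PathB :=
  if a.2 ≤ -1 then some (a.1, a.2 + 1) else none

/-- the action `q · (a)⁻¹`: remove a single `q` from the back of `a` -/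
def backQ (a : PathB) : Option PathB :=
  if 1 ≤ a.2 then some (a.1, a.2 - 1) else none

/-! ### The twisted complex `𝓛(M)` -/

/-- generators of `𝒜∂ᵒᵖ ⊗_ℐ M`: pairs (basis path `a`, generator `x` of `M`);
such a pair lies in the summand of `𝓛(M)` indexed by `L_{endV a}` -/
abbrev Idx (G : Type) := PathB × G

noncomputable def toRow {G : Type} (o : Option (Idx G)) (mor : B) :
    (Idx G × B) →₀ ZMod 2 :=
  match o with
  | some gg => Finsupp.single (gg, mor) 1
  | none => 0

/-- the entries of the structure map `δ` of `𝓛(M)` leaving the generator `gg`: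
`δ(b ⊗ m ⊗ L_j) = b·∂_M(m) ⊗ id_{L_j} + p·b ⊗ m ⊗ u_{j,j+1} + q·b ⊗ m ⊗ v_{j,j−1}` -/
noncomputable def deltaRow {G : Type} [Fintype G] (d : G → G → AP) (gg : Idx G) :
    (Idx G × B) →₀ ZMod 2 :=
  (∑ y : G, (d gg.2 y).sum fun dc c =>
      c • toRow ((frontAct gg.1 dc).map fun a' => (a', y)) (B.endo (endV gg.1) 0))
  + toRow ((backP gg.1).map fun a' => (a', gg.2)) (B.uu (endV gg.1) 0)
  + toRow ((backQ gg.1).map fun a' => (a', gg.2)) (B.vv (endV gg.1) 0)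

/-- length-`k` chains of entries of `δ` starting at `gg`, recording the endpoint and
the list of morphism labels along the way -/
noncomputable def chains {G : Type} [DecidableEq G]
    (row : Idx G → ((Idx G × B) →₀ ZMod 2)) :
    ℕ → Idx G → ((Idx G × List B) →₀ ZMod 2)
  | 0, gg => Finsupp.single (gg, []) 1
  | k + 1, gg =>
      (chains row k gg).sum fun pth c =>
        c • ((row pth.1).sum fun qq c' => Finsupp.single (qq.1, pth.2 ++ [qq.2]) c')

/-- the `(gg, gg')`-entry of `μ_k(δ, …, δ)` -/
noncomputable def MCterm {G : Type} [DecidableEq G] (mu : List B → Option B)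
    (row : Idx G → ((Idx G × B) →₀ ZMod 2)) (k : ℕ) (gg gg' : Idx G) : H :=
  (chains row k gg).sum fun pth c => if pth.1 = gg' then c • toH (mu pth.2) else 0

end Stmt15

/-!
Among the compositions of the labels `id`, `u`, `v` of `δ`, the only nonzero higher operations
are `μ₄(u,u,u,u) = id = μ₄(v,v,v,v)`, so only chains of length 2 and 4 contribute.
In `μ₂(δ, δ)` the `∂∂`-term is `(a)⁻¹·∂_M² = (a)⁻¹·(p⁴ + q⁴)`; in the cross terms `∂u + u∂` and
`∂v + v∂` the two summands agree, because removing a coefficient of `∂_M` from the front of a path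
commutes with removing a `p` or `q` from its back; `uu` and `vv` compose to zero, and `uv`, `vu`
never occur since no path can lose a `p` and then a `q` from its back.
In `μ₄(δ, …, δ)` only the chains removing four `p`'s or four `q`'s survive, and they give the
same `(p⁴ + q⁴) ⊗ id` once more, so the two contributions cancel in characteristic 2.
-/

open Finsupp

section Generic

variable {α β R M : Type*} [Semiring R] [AddCommMonoid M] [Module R M]

theorem Finsupp.linearCombination_congr {f : α →₀ R} {v w : α → M}
    (h : ∀ a ∈ f.support, v a = w a) : linearCombination R v f = linearCombination R w f := by
  simp only [linearCombination_apply]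
  exact Finsupp.sum_congr fun a ha => by rw [h a ha]

theorem Finsupp.linearCombination_finsetSum_fun (l : α →₀ R) (s : Finset β) (f : β → α → M) :
    linearCombination R (fun a => ∑ b ∈ s, f b a) l = ∑ b ∈ s, linearCombination R (f b) l := by
  simp only [linearCombination_apply, Finsupp.sum, Finset.smul_sum]
  exact Finset.sum_comm

theorem Option.elim_zero_bind (o : Option α) (f : α → Option β) (g : β → M) :
    (o.bind f).elim 0 g = o.elim 0 fun a => (f a).elim 0 g := by
  cases o <;> rfl

theorem Option.elim_zero_finsetSum (o : Option α) (s : Finset β) (f : α → β → M) :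
    (o.elim 0 fun a => ∑ b ∈ s, f a b) = ∑ b ∈ s, o.elim 0 (f · b) := by
  cases o <;> simp

theorem Option.elim_zero_linearCombination (o : Option α) (l : β →₀ R) (f : α → β → M) :
    (o.elim 0 fun a => linearCombination R (f a) l) =
      linearCombination R (fun b => o.elim 0 (f · b)) l := by
  cases o
  · exact (linearCombination_zero_apply _ l).symm
  · rfl

end Generic

namespace Stmt15

section Operations

/-- The labels `id_i`, `u_i`, `v_i` carried by the components of `δ`. -/
def IsBasic : B → Prop
  | .endo _ n => n = 0
  | .uu _ k => k = 0
  | .vv _ k => k = 0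

theorem eq_endo_of_mu2_uu {a c : B} {i : ZMod 4} (h : mu2 a (.uu i 0) = some c)
    (hc : IsBasic c) : a = .endo i 0 ∧ c = .uu i 0 := by
  cases a <;> cases c <;> simp_all [mu2, IsBasic]
  omega

theorem eq_endo_of_mu2_vv {a c : B} {i : ZMod 4} (h : mu2 a (.vv i 0) = some c)
    (hc : IsBasic c) : a = .endo i 0 ∧ c = .vv i 0 := by
  cases a <;> cases c <;> simp_all [mu2, IsBasic]
  omega

theorem eq_endo_of_uu_mu2 {b c : B} {i : ZMod 4} (h : mu2 (.uu i 0) b = some c)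
    (hc : IsBasic c) : b = .endo (i + 1) 0 ∧ c = .uu i 0 := by
  cases b <;> cases c <;> simp_all [mu2, IsBasic]
  omega

theorem eq_endo_of_vv_mu2 {b c : B} {i : ZMod 4} (h : mu2 (.vv i 0) b = some c)
    (hc : IsBasic c) : b = .endo (i - 1) 0 ∧ c = .vv i 0 := by
  cases b <;> cases c <;> simp_all [mu2, IsBasic]
  omega

theorem uLoop_succ (i : ZMod 4) (k : ℕ) : uLoop i (k + 1) = .uu i 0 :: uLoop (i + 1) k := by
  simp only [uLoop, List.ofFn_succ]
  simp only [Fin.val_zero, Nat.cast_zero, add_zero, Fin.val_succ, Nat.cast_succ, List.cons.injEq,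
    true_and]
  congr 1; funext t; congr 1; ring

theorem vLoop_succ (i : ZMod 4) (k : ℕ) : vLoop i (k + 1) = .vv i 0 :: vLoop (i - 1) k := by
  simp only [vLoop, List.ofFn_succ]
  simp only [Fin.val_zero, Nat.cast_zero, sub_zero, Fin.val_succ, Nat.cast_succ, List.cons.injEq,
    true_and]
  congr 1; funext t; congr 1; ring

theorem uLoop_four (i : ZMod 4) :
    uLoop i 4 = [.uu i 0] ++ uLoop (i + 1) 2 ++ [.uu (i - 1) 0] := by
  simp [uLoop, List.ofFn_succ, add_assoc]
  grind

theorem vLoop_four (i : ZMod 4) :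
    vLoop i 4 = [.vv i 0] ++ vLoop (i - 1) 2 ++ [.vv (i + 1) 0] := by
  simp [vLoop, List.ofFn_succ, sub_sub]
  grind

theorem endo_notMem_uLoop (i j : ZMod 4) (k : ℕ) : B.endo j 0 ∉ uLoop i k := by
  simp [uLoop, List.mem_ofFn]

theorem endo_notMem_vLoop (i j : ZMod 4) (k : ℕ) : B.endo j 0 ∉ vLoop i k := by
  simp [vLoop, List.mem_ofFn]

variable {mu : List B → Option B}

theorem IsMu.mu_uLoop (hmu : IsMu mu) (i : ZMod 4) : mu (uLoop i 4) = some (.endo i 0) := by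
  have h := hmu.expand_u [] [] (.endo i 0) (.endo i 0) (.uu i 0) (.uu (i - 1) 0) i
    (by simp [mu2]) (by simp [mu2])
  rw [List.nil_append, List.append_nil, ← uLoop_four, List.nil_append, List.append_nil,
    hmu.binary] at h
  simpa [mu2] using h

theorem IsMu.mu_vLoop (hmu : IsMu mu) (i : ZMod 4) : mu (vLoop i 4) = some (.endo i 0) := by
  have h := hmu.expand_v [] [] (.endo i 0) (.endo i 0) (.vv i 0) (.vv (i + 1) 0) i
    (by simp [mu2]) (by simp [mu2])
  rw [List.nil_append, List.append_nil, ← vLoop_four, List.nil_append, List.append_nil,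
    hmu.binary] at h
  simpa [mu2] using h

theorem IsMu.exists_loop (hmu : IsMu mu) {l : List B} (hl : ∀ b ∈ l, IsBasic b)
    (h2 : l.length ≠ 2) (h : mu l ≠ none) :
    ∃ (pre post : List B) (i : ZMod 4),
      (l = pre ++ uLoop i 4 ++ post ∨ l = pre ++ vLoop i 4 ++ post) ∧
        mu l = mu (pre ++ [.endo i 0, .endo i 0] ++ post) := by
  obtain ⟨pre, post, a, b, ca, cb, i, hloop | hloop, hmu_eq⟩ := hmu.vanish l h2 h
  · obtain ⟨hca, hcb, rfl⟩ := hloop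
    obtain ⟨rfl, rfl⟩ := eq_endo_of_mu2_uu hca (hl _ (by simp))
    obtain ⟨rfl, rfl⟩ := eq_endo_of_uu_mu2 hcb (hl _ (by simp))
    exact ⟨pre, post, i, Or.inl (by simp [uLoop_four]), by simpa using hmu_eq⟩
  · obtain ⟨hca, hcb, rfl⟩ := hloop
    obtain ⟨rfl, rfl⟩ := eq_endo_of_mu2_vv hca (hl _ (by simp))
    obtain ⟨rfl, rfl⟩ := eq_endo_of_vv_mu2 hcb (hl _ (by simp))
    exact ⟨pre, post, i, Or.inr (by simp [vLoop_four]), by simpa using hmu_eq⟩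

theorem IsMu.length_eq_two_or_eq_loop (hmu : IsMu mu) {l : List B} (hl : ∀ b ∈ l, IsBasic b)
    (h : mu l ≠ none) : l.length = 2 ∨ ∃ i, l = uLoop i 4 ∨ l = vLoop i 4 := by
  induction hn : l.length using Nat.strong_induction_on generalizing l with
  | _ n ih =>
    by_cases h2 : n = 2
    · exact Or.inl h2
    obtain ⟨pre, post, i, hloop, hmu_eq⟩ := hmu.exists_loop hl (hn ▸ h2) h
    by_cases hpp : pre = [] ∧ post = []
    · obtain ⟨rfl, rfl⟩ := hpp
      exact Or.inr ⟨i, by simpa using hloop⟩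
    have hlen : (pre ++ [B.endo i 0, B.endo i 0] ++ post).length + 2 = n := by
      rcases hloop with rfl | rfl <;> simp [← hn, uLoop, vLoop] <;> omega
    have hpos : pre.length + post.length ≠ 0 := by
      simpa [List.length_eq_zero_iff] using hpp
    have hshort : ∀ b ∈ pre ++ [B.endo i 0, B.endo i 0] ++ post, IsBasic b := by
      rcases hloop with rfl | rfl <;> simp_all [IsBasic] <;> grind
    rcases ih _ (by omega) hshort (hmu_eq ▸ h) rfl with h2' | ⟨j, hj | hj⟩
    · simp at h2'; omega
    · exact absurd (hj ▸ (by simp) : B.endo i 0 ∈ uLoop j 4) (endo_notMem_uLoop j i 4)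
    · exact absurd (hj ▸ (by simp) : B.endo i 0 ∈ vLoop j 4) (endo_notMem_vLoop j i 4)

theorem IsMu.eq_none_of_length (hmu : IsMu mu) {l : List B} (hl : ∀ b ∈ l, IsBasic b)
    (h2 : l.length ≠ 2) (h4 : l.length ≠ 4) : mu l = none := by
  by_contra h
  rcases hmu.length_eq_two_or_eq_loop hl h with h' | ⟨i, rfl | rfl⟩
  · exact h2 h'
  · exact h4 (by simp [uLoop])
  · exact h4 (by simp [vLoop])

theorem IsMu.eq_none_of_endo_mem (hmu : IsMu mu) {l : List B} (hl : ∀ b ∈ l, IsBasic b)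
    (h4 : l.length = 4) {i : ZMod 4} (hi : B.endo i 0 ∈ l) : mu l = none := by
  by_contra h
  rcases hmu.length_eq_two_or_eq_loop hl h with h' | ⟨j, rfl | rfl⟩
  · omega
  · exact endo_notMem_uLoop j i 4 hi
  · exact endo_notMem_vLoop j i 4 hi

end Operations

@[simp] theorem toH_none : toH none = 0 := rfl

@[simp] theorem toH_some (b : B) : toH (some b) = single b 1 := rfl

section Chains

variable {G : Type} [DecidableEq G] (mu : List B → Option B)
  (row : Idx G → (Idx G × B) →₀ ZMod 2) (gg' : Idx G)

/-- The entry from `p` to `gg'` of `μ(L, δ, …, δ)` with `r` copies of `δ = row`. -/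
noncomputable def MCentry : ℕ → Idx G → List B → H
  | 0, p, L => if p = gg' then toH (mu L) else 0
  | r + 1, p, L => linearCombination (ZMod 2) (fun q => MCentry r q.1 (L ++ [q.2])) (row p)

theorem MCentry_zero (p : Idx G) (L : List B) :
    MCentry mu row gg' 0 p L = if p = gg' then toH (mu L) else 0 := rfl

theorem chains_succ_eq (k : ℕ) (p : Idx G) :
    chains row (k + 1) p = linearCombination (ZMod 2)
      (fun pth => linearCombination (ZMod 2) (fun q => single (q.1, pth.2 ++ [q.2]) 1)
        (row pth.1)) (chains row k p) := by
  simp only [chains, linearCombination_apply, smul_single, smul_eq_mul, mul_one]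

theorem linearCombination_chains (k : ℕ) :
    ∀ (r : ℕ) (p : Idx G) (L : List B),
      linearCombination (ZMod 2) (fun pth => MCentry mu row gg' r pth.1 (L ++ pth.2))
        (chains row k p) = MCentry mu row gg' (k + r) p L := by
  induction k with
  | zero => intro r p L; simp [chains]
  | succ k ih =>
    intro r p L
    rw [chains_succ_eq, linearCombination_linearCombination, show k + 1 + r = k + (r + 1) by omega,
      ← ih]
    refine linearCombination_congr fun pth _ => ?_
    simp [linearCombination_linearCombination, MCentry]

theorem MCterm_eq_MCentry (k : ℕ) (gg : Idx G) :
    MCterm mu row k gg gg' = MCentry mu row gg' k gg [] := by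
  rw [← add_zero k, ← linearCombination_chains, MCterm, linearCombination_apply]
  refine Finsupp.sum_congr fun pth _ => ?_
  simp only [MCentry, List.nil_append]
  split_ifs <;> simp

variable {mu row gg'} in
theorem MCentry_eq_zero (hrow : ∀ p, ∀ q ∈ (row p).support, IsBasic q.2) (r : ℕ) :
    ∀ (p : Idx G) (L : List B),
      (∀ M : List B, (∀ b ∈ M, IsBasic b) → M.length = r → mu (L ++ M) = none) →
        MCentry mu row gg' r p L = 0 := by
  induction r with
  | zero =>
    intro p L h
    have hL : mu L = none := by simpa using h [] (by simp) rfl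
    simp [MCentry, hL]
  | succ r ih =>
    intro p L h
    rw [MCentry, linearCombination_congr (w := 0) fun q hq => ih _ _ fun M hM hlen => ?_,
      linearCombination_zero_apply]
    simpa using h (q.2 :: M) (List.forall_mem_cons.2 ⟨hrow p q hq, hM⟩) (by simp [hlen])

end Chains

section Paths

theorem frontAct_bind_frontAct (a dc dc' : PathB) :
    (frontAct a dc).bind (frontAct · dc') = (mulP dc dc').bind (frontAct a) := by
  obtain ⟨i, s⟩ := a; obtain ⟨j, m⟩ := dc; obtain ⟨k, n⟩ := dc'
  unfold frontAct mulP endV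
  split_ifs <;> simp only [Option.bind_some, Option.bind_none] <;> split_ifs <;>
    simp_all [mul_nonneg_iff, add_assoc] <;> omega

theorem frontAct_bind_backP (a dc : PathB) :
    (frontAct a dc).bind backP = (backP a).bind (frontAct · dc) := by
  obtain ⟨i, s⟩ := a; obtain ⟨j, m⟩ := dc
  unfold frontAct backP
  split_ifs <;> simp only [Option.bind_some, Option.bind_none] <;> split_ifs <;> simp_all <;> omega

theorem frontAct_bind_backQ (a dc : PathB) :
    (frontAct a dc).bind backQ = (backQ a).bind (frontAct · dc) := by
  obtain ⟨i, s⟩ := a; obtain ⟨j, m⟩ := dc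
  unfold frontAct backQ
  split_ifs <;> simp only [Option.bind_some, Option.bind_none] <;> split_ifs <;> simp_all <;> omega

theorem frontAct_q4 (a : PathB) :
    frontAct a (a.1, 4) = if 4 ≤ a.2 then some (a.1, a.2 - 4) else none := by
  unfold frontAct
  split_ifs <;> simp_all
  decide

theorem frontAct_p4 (a : PathB) :
    frontAct a (a.1, -4) = if a.2 ≤ -4 then some (a.1, a.2 + 4) else none := by
  unfold frontAct
  split_ifs <;> simp_all
  decide

theorem endV_of_frontAct {a dc a' : PathB} (h : frontAct a dc = some a') : endV a' = endV a := by
  unfold frontAct at h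
  split_ifs at h
  cases h
  simp [endV]

theorem endV_of_backP {a a' : PathB} (h : backP a = some a') : endV a' = endV a + 1 := by
  unfold backP at h
  split_ifs at h
  cases h
  simp [endV]; ring

theorem endV_of_backQ {a a' : PathB} (h : backQ a = some a') : endV a' = endV a - 1 := by
  unfold backQ at h
  split_ifs at h
  cases h
  simp [endV]; ring

theorem backQ_eq_none_of_backP {a a' : PathB} (h : backP a = some a') : backQ a' = none := by
  unfold backP at h
  split_ifs at h
  cases h
  simp [backQ]; omega

theorem backP_eq_none_of_backQ {a a' : PathB} (h : backQ a = some a') : backP a' = none := by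
  unfold backQ at h
  split_ifs at h
  cases h
  simp [backP]; omega

theorem mulAP_eq (f g : AP) : mulAP f g = linearCombination (ZMod 2)
    (fun a => linearCombination (ZMod 2) (fun b => toAP (mulP a b)) g) f := by
  simp only [mulAP, linearCombination_apply, Finsupp.smul_sum, mul_smul]

end Paths

section FrontSum

variable {G : Type} [Fintype G] (d : G → G → AP)
variable {M : Type*} [AddCommMonoid M] [Module (ZMod 2) M]

/-- `frontSum d (a, x) φ` evaluates `φ` on `(a)⁻¹ · ∂_M(x)`. -/
noncomputable def frontSum (p : Idx G) (φ : Idx G → M) : M :=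
  ∑ y, linearCombination (ZMod 2) (fun dc => (frontAct p.1 dc).elim 0 fun a' => φ (a', y))
    (d p.2 y)

/-- `∂_M² = (p⁴ + q⁴) ⊗ 1`. -/
def HasPeculiarCurvature [DecidableEq G] (idem : G → ZMod 4) : Prop :=
  ∀ x z : G,
    (∑ y : G, mulAP (d x y) (d y z)) =
      if x = z then
        Finsupp.single ((idem x, (4 : ℤ)) : PathB) (1 : ZMod 2)
          + Finsupp.single ((idem x, (-4 : ℤ)) : PathB) (1 : ZMod 2)
      else 0

theorem frontSum_add (p : Idx G) (φ ψ : Idx G → M) :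
    frontSum d p (fun p' => φ p' + ψ p') = frontSum d p φ + frontSum d p ψ := by
  simp only [frontSum, ← Finset.sum_add_distrib]
  refine Finset.sum_congr rfl fun y _ => ?_
  simp only [linearCombination_apply, ← Finsupp.sum_add]
  refine Finsupp.sum_congr fun dc _ => ?_
  cases frontAct p.1 dc <;> simp [smul_add]

theorem frontSum_congr {p : Idx G} {φ ψ : Idx G → M}
    (h : ∀ p' : Idx G, endV p'.1 = endV p.1 → φ p' = ψ p') : frontSum d p φ = frontSum d p ψ := by
  refine Finset.sum_congr rfl fun y _ => congrArg (linearCombination (ZMod 2) · _) ?_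
  funext dc
  cases hf : frontAct p.1 dc
  · rfl
  · exact h _ (endV_of_frontAct hf)

theorem frontSum_eq_zero {p : Idx G} {φ : Idx G → M} (h : ∀ p', φ p' = 0) :
    frontSum d p φ = 0 := by
  refine Finset.sum_eq_zero fun y _ => ?_
  have h0 : (fun dc => (frontAct p.1 dc).elim 0 fun a' => φ (a', y)) = 0 := by
    funext dc; cases frontAct p.1 dc <;> simp [h]
  rw [h0, linearCombination_zero_apply]

theorem frontSum_frontSum (p : Idx G) (φ : Idx G → M) :
    frontSum d p (fun p1 => frontSum d p1 φ) = ∑ z, linearCombination (ZMod 2)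
      (fun e => (frontAct p.1 e).elim 0 fun a' => φ (a', z)) (∑ y, mulAP (d p.2 y) (d y z)) := by
  have htoAP : ∀ (o : Option PathB) (ψ : PathB → M),
      linearCombination (ZMod 2) ψ (toAP o) = o.elim 0 ψ := by
    intro o ψ; cases o <;> simp [toAP]
  simp only [frontSum, map_sum, mulAP_eq, linearCombination_linearCombination, htoAP,
    ← Option.elim_zero_bind, ← frontAct_bind_frontAct, Option.elim_zero_finsetSum,
    Option.elim_zero_linearCombination, linearCombination_finsetSum_fun]
  exact Finset.sum_comm

theorem frontSum_frontSum_of_curvature [DecidableEq G] {idem : G → ZMod 4}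
    (hcurv : HasPeculiarCurvature d idem) {a : PathB} {x : G} (ha : a.1 = idem x)
    (φ : Idx G → M) :
    frontSum d (a, x) (fun p1 => frontSum d p1 φ) =
      (if 4 ≤ a.2 then φ ((a.1, a.2 - 4), x) else 0) +
        (if a.2 ≤ -4 then φ ((a.1, a.2 + 4), x) else 0) := by
  unfold HasPeculiarCurvature at hcurv
  simp only [frontSum_frontSum, hcurv, apply_ite, map_add, linearCombination_single, one_smul,
    map_zero, Finset.sum_ite_eq, Finset.mem_univ, if_true, ← ha, frontAct_q4, frontAct_p4]
  split_ifs <;> simp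

theorem frontSum_backP (p : Idx G) (φ : Idx G → M) :
    frontSum d p (fun p1 => (backP p1.1).elim 0 fun a2 => φ (a2, p1.2)) =
      (backP p.1).elim 0 fun a1 => frontSum d (a1, p.2) φ := by
  simp only [frontSum, Option.elim_zero_finsetSum, Option.elim_zero_linearCombination]
  refine Finset.sum_congr rfl fun y _ =>
    congrArg (linearCombination (ZMod 2) · _) (funext fun dc => ?_)
  rw [← Option.elim_zero_bind, frontAct_bind_backP, Option.elim_zero_bind]

theorem frontSum_backQ (p : Idx G) (φ : Idx G → M) :
    frontSum d p (fun p1 => (backQ p1.1).elim 0 fun a2 => φ (a2, p1.2)) =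
      (backQ p.1).elim 0 fun a1 => frontSum d (a1, p.2) φ := by
  simp only [frontSum, Option.elim_zero_finsetSum, Option.elim_zero_linearCombination]
  refine Finset.sum_congr rfl fun y _ =>
    congrArg (linearCombination (ZMod 2) · _) (funext fun dc => ?_)
  rw [← Option.elim_zero_bind, frontAct_bind_backQ, Option.elim_zero_bind]

end FrontSum

section TwistedComplex

theorem linearCombination_toRow {G : Type} {M : Type*} [AddCommMonoid M] [Module (ZMod 2) M]
    (o : Option (Idx G)) (b : B) (φ : Idx G × B → M) :
    linearCombination (ZMod 2) φ (toRow o b) = o.elim 0 fun p => φ (p, b) := by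
  cases o <;> simp [toRow]

variable {G : Type} [Fintype G] (d : G → G → AP)

theorem deltaRow_mem_supported (p : Idx G) :
    deltaRow d p ∈ supported (ZMod 2) (ZMod 2) {q : Idx G × B | IsBasic q.2} := by
  have hrow : ∀ (o : Option (Idx G)) {b : B}, IsBasic b →
      toRow o b ∈ supported (ZMod 2) (ZMod 2) {q : Idx G × B | IsBasic q.2} := by
    intro o b hb
    cases o
    · exact zero_mem _
    · exact single_mem_supported _ _ hb
  refine add_mem (add_mem (sum_mem fun y _ => ?_) (hrow _ rfl)) (hrow _ rfl)
  exact Submodule.finsuppSum_mem _ _ _ _ fun dc _ => Submodule.smul_mem _ _ (hrow _ rfl)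

theorem deltaRow_isBasic (p : Idx G) : ∀ q ∈ (deltaRow d p).support, IsBasic q.2 :=
  fun _ hq => (mem_supported _ _).1 (deltaRow_mem_supported d p) hq

variable [DecidableEq G] {mu : List B → Option B}

theorem MCentry_deltaRow_succ (gg' : Idx G) (r : ℕ) (p : Idx G) (L : List B) :
    MCentry mu (deltaRow d) gg' (r + 1) p L =
      frontSum d p (fun p' => MCentry mu (deltaRow d) gg' r p' (L ++ [.endo (endV p.1) 0]))
      + (backP p.1).elim 0 (fun a' => MCentry mu (deltaRow d) gg' r (a', p.2)
          (L ++ [.uu (endV p.1) 0]))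
      + (backQ p.1).elim 0 (fun a' => MCentry mu (deltaRow d) gg' r (a', p.2)
          (L ++ [.vv (endV p.1) 0])) := by
  simp only [MCentry, deltaRow, map_add, map_sum, linearCombination_toRow, frontSum,
    Option.elim_map, ← linearCombination_apply, linearCombination_linearCombination]
  rfl

theorem MCterm_deltaRow_eq_zero (hmu : IsMu mu) {k : ℕ} (hk2 : k ≠ 2) (hk4 : k ≠ 4)
    (gg gg' : Idx G) : MCterm mu (deltaRow d) k gg gg' = 0 := by
  rw [MCterm_eq_MCentry]
  refine MCentry_eq_zero (deltaRow_isBasic d) k gg [] fun M hM hlen => ?_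
  exact hmu.eq_none_of_length (by simpa using hM) (by simp [hlen, hk2]) (by simp [hlen, hk4])

theorem MCentry_deltaRow_succ_of_length_eq_four (hmu : IsMu mu) (gg' : Idx G) {r : ℕ} (p : Idx G)
    {L : List B} (hL : ∀ b ∈ L, IsBasic b) (hlen : L.length + (r + 1) = 4) :
    MCentry mu (deltaRow d) gg' (r + 1) p L =
      (backP p.1).elim 0 (fun a' => MCentry mu (deltaRow d) gg' r (a', p.2)
          (L ++ [.uu (endV p.1) 0]))
      + (backQ p.1).elim 0 (fun a' => MCentry mu (deltaRow d) gg' r (a', p.2)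
          (L ++ [.vv (endV p.1) 0])) := by
  rw [MCentry_deltaRow_succ, frontSum_eq_zero, zero_add]
  refine fun p' => MCentry_eq_zero (deltaRow_isBasic d) r p' _ fun M hM hMlen => ?_
  refine hmu.eq_none_of_endo_mem (i := endV p.1) ?_ (by simp; omega) (by simp)
  simp only [List.mem_append, List.mem_singleton]
  rintro b ((hb | rfl) | hb)
  exacts [hL b hb, rfl, hM b hb]

theorem MCentry_deltaRow_of_nonpos (hmu : IsMu mu) (gg' : Idx G) (x : G) (r : ℕ) :
    ∀ (a : PathB) (L : List B), a.2 ≤ 0 → (∀ b ∈ L, IsBasic b) → L.length + r = 4 →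
      MCentry mu (deltaRow d) gg' r (a, x) L =
        if a.2 ≤ -r ∧ ((a.1, a.2 + r), x) = gg' then toH (mu (L ++ uLoop (endV a) r))
        else 0 := by
  induction r with
  | zero => intro a L ha _ _; simp [MCentry_zero, ha, uLoop]
  | succ r ih =>
    intro a L ha hL hlen
    rw [MCentry_deltaRow_succ_of_length_eq_four d hmu gg' _ hL hlen]
    have hQ : backQ a = none := by simp [backQ]; omega
    by_cases hp : a.2 ≤ -1
    · have hP : backP a = some (a.1, a.2 + 1) := by simp [backP, hp]
      have hL' : ∀ b ∈ L ++ [.uu (endV a) 0], IsBasic b :=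
        List.forall_mem_append.2 ⟨hL, by simp [IsBasic]⟩
      rw [hP, hQ, Option.elim_some, Option.elim_none, add_zero,
        ih _ _ (by simp; omega) hL' (by simp; omega), endV_of_backP hP, List.append_assoc,
        List.singleton_append, ← uLoop_succ]
      have e1 : a.2 + 1 ≤ -(r : ℤ) ↔ a.2 ≤ -((r + 1 : ℕ) : ℤ) := by push_cast; omega
      have e2 : a.2 + 1 + r = a.2 + ((r + 1 : ℕ) : ℤ) := by push_cast; ring
      simp only [e1, e2]
    · have hP : backP a = none := by simp [backP, hp]
      simp [hP, hQ]; omega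

theorem MCentry_deltaRow_of_nonneg (hmu : IsMu mu) (gg' : Idx G) (x : G) (r : ℕ) :
    ∀ (a : PathB) (L : List B), 0 ≤ a.2 → (∀ b ∈ L, IsBasic b) → L.length + r = 4 →
      MCentry mu (deltaRow d) gg' r (a, x) L =
        if (r : ℤ) ≤ a.2 ∧ ((a.1, a.2 - r), x) = gg' then toH (mu (L ++ vLoop (endV a) r))
        else 0 := by
  induction r with
  | zero => intro a L ha _ _; simp [MCentry_zero, ha, vLoop]
  | succ r ih =>
    intro a L ha hL hlen
    rw [MCentry_deltaRow_succ_of_length_eq_four d hmu gg' _ hL hlen]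
    have hP : backP a = none := by simp [backP]; omega
    by_cases hq : 1 ≤ a.2
    · have hQ : backQ a = some (a.1, a.2 - 1) := by simp [backQ, hq]
      have hL' : ∀ b ∈ L ++ [.vv (endV a) 0], IsBasic b :=
        List.forall_mem_append.2 ⟨hL, by simp [IsBasic]⟩
      rw [hP, hQ, Option.elim_some, Option.elim_none, zero_add,
        ih _ _ (by simp; omega) hL' (by simp; omega), endV_of_backQ hQ, List.append_assoc,
        List.singleton_append, ← vLoop_succ]
      have e1 : (r : ℤ) ≤ a.2 - 1 ↔ ((r + 1 : ℕ) : ℤ) ≤ a.2 := by push_cast; omega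
      have e2 : a.2 - 1 - r = a.2 - ((r + 1 : ℕ) : ℤ) := by push_cast; ring
      simp only [e1, e2]
    · have hQ : backQ a = none := by simp [backQ, hq]
      simp [hP, hQ]; omega

/-- The `((a, x), gg')`-entry of `(p⁴ + q⁴) ⊗ id`. -/
noncomputable def curvatureEntry (gg' : Idx G) (a : PathB) (x : G) : H :=
  (if 4 ≤ a.2 ∧ ((a.1, a.2 - 4), x) = gg' then single (.endo (endV a) 0) 1 else 0) +
    (if a.2 ≤ -4 ∧ ((a.1, a.2 + 4), x) = gg' then single (.endo (endV a) 0) 1 else 0)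

theorem MCentry_deltaRow_four (hmu : IsMu mu) (gg' : Idx G) (a : PathB) (x : G) :
    MCentry mu (deltaRow d) gg' 4 (a, x) [] = curvatureEntry gg' a x := by
  rcases le_total a.2 0 with ha | ha
  · rw [MCentry_deltaRow_of_nonpos d hmu gg' x 4 a [] ha (by simp) rfl]
    have : ¬ 4 ≤ a.2 := by omega
    simp [curvatureEntry, hmu.mu_uLoop, this]
  · rw [MCentry_deltaRow_of_nonneg d hmu gg' x 4 a [] ha (by simp) rfl]
    have : ¬ a.2 ≤ -4 := by omega
    simp [curvatureEntry, hmu.mu_vLoop, this]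

theorem MCentry_deltaRow_two (hmu : IsMu mu) {idem : G → ZMod 4}
    (hcurv : HasPeculiarCurvature d idem) (gg' : Idx G) {a : PathB} {x : G}
    (ha : a.1 = idem x) :
    MCentry mu (deltaRow d) gg' 2 (a, x) [] = curvatureEntry gg' a x := by
  let ψ : B → Idx G → H := fun b p => if p = gg' then single b 1 else 0
  have hF : frontSum d (a, x)
      (fun p1 => MCentry mu (deltaRow d) gg' 1 p1 [.endo (endV a) 0]) =
        frontSum d (a, x) (fun p1 => frontSum d p1 (ψ (.endo (endV a) 0))) +
        frontSum d (a, x) (fun p1 => (backP p1.1).elim 0 fun a2 => ψ (.uu (endV a) 0) (a2, p1.2)) +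
        frontSum d (a, x) (fun p1 => (backQ p1.1).elim 0 fun a2 => ψ (.vv (endV a) 0) (a2, p1.2)) := by
    rw [← frontSum_add, ← frontSum_add]
    refine frontSum_congr d fun p1 hp1 => ?_
    rw [MCentry_deltaRow_succ]
    simp [MCentry_zero, hp1, hmu.binary, mu2, ψ]
  have hP : (backP a).elim 0 (fun a1 => MCentry mu (deltaRow d) gg' 1 (a1, x) [.uu (endV a) 0]) =
      (backP a).elim 0 fun a1 => frontSum d (a1, x) (ψ (.uu (endV a) 0)) := by
    cases h : backP a with
    | none => rfl
    | some a1 =>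
      rw [Option.elim_some, Option.elim_some, MCentry_deltaRow_succ, backQ_eq_none_of_backP h]
      simp [MCentry_zero, endV_of_backP h, hmu.binary, mu2, ψ]
      cases backP a1 <;> rfl
  have hQ : (backQ a).elim 0 (fun a1 => MCentry mu (deltaRow d) gg' 1 (a1, x) [.vv (endV a) 0]) =
      (backQ a).elim 0 fun a1 => frontSum d (a1, x) (ψ (.vv (endV a) 0)) := by
    cases h : backQ a with
    | none => rfl
    | some a1 =>
      rw [Option.elim_some, Option.elim_some, MCentry_deltaRow_succ, backP_eq_none_of_backQ h]
      simp [MCentry_zero, endV_of_backQ h, hmu.binary, mu2, ψ]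
      cases backQ a1 <;> rfl
  have hcancel : ∀ X Y Z : H, X + Y + Z + Y + Z = X := fun X Y Z => by
    rw [show X + Y + Z + Y + Z = X + (Y + Y) + (Z + Z) by abel, ZModModule.add_self,
      ZModModule.add_self, add_zero, add_zero]
  rw [MCentry_deltaRow_succ]
  simp only [List.nil_append]
  rw [hF, hP, hQ, ← frontSum_backP d (a, x), ← frontSum_backQ d (a, x),
    frontSum_frontSum_of_curvature d hcurv ha, hcancel]
  simp only [curvatureEntry, ite_and, ψ]

end TwistedComplex

end Stmt15

open Stmt15 in
theorem stmt15_general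
    -- the A∞-operations of `𝒜`:
    (mu : List B → Option B) (hmu : IsMu mu)
    -- a (finitely generated) peculiar module M, given by generators `G`,
    -- idempotents `idem` and differential coefficients `d`:
    (G : Type) [Fintype G] [DecidableEq G]
    (idem : G → ZMod 4) (d : G → G → AP)
    -- the curvature: ∂_M² = (p⁴ + q⁴) ⊗ 1:
    (hcurv : ∀ x z : G,
        (∑ y : G, mulAP (d x y) (d y z)) =
          if x = z then
            Finsupp.single ((idem x, (4 : ℤ)) : PathB) (1 : ZMod 2)
              + Finsupp.single ((idem x, (-4 : ℤ)) : PathB) (1 : ZMod 2)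
          else 0) :
    -- the Maurer–Cartan equation for `𝓛(M)`, entrywise (the sum stabilises for N ≥ 4):
    ∀ gg : Idx G, gg.1.1 = idem gg.2 →
      ∀ (gg' : Idx G) (N : ℕ), 4 ≤ N →
        ∑ k ∈ Finset.Icc 1 N, MCterm mu (deltaRow d) k gg gg' = 0 := by
  rintro ⟨a, x⟩ ha gg' N hN
  have hsub : ({2, 4} : Finset ℕ) ⊆ Finset.Icc 1 N := by
    intro k hk
    simp only [Finset.mem_insert, Finset.mem_singleton] at hk
    rw [Finset.mem_Icc]
    omega
  rw [← Finset.sum_subset hsub fun k _ hk =>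
      MCterm_deltaRow_eq_zero d hmu (by simp_all) (by simp_all) _ _,
    Finset.sum_pair (by decide), MCterm_eq_MCentry, MCterm_eq_MCentry,
    MCentry_deltaRow_two d hmu hcurv gg' ha, MCentry_deltaRow_four d hmu, ZModModule.add_self]

open Stmt15 in
theorem stmt15
    -- the A∞-operations of `𝒜`:
    (mu : List B → Option B) (hmu : IsMu mu)
    -- a (finitely generated) peculiar module M, given by generators `G`,
    -- idempotents `idem` and differential coefficients `d`:
    (G : Type) [Fintype G] [DecidableEq G]
    (idem : G → ZMod 4) (d : G → G → AP)
    -- the coefficients of ∂_M are paths from `idem x` to `idem y`: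
    (hsupp : ∀ x y : G, ∀ dc ∈ (d x y).support, dc.1 = idem x ∧ endV dc = idem y)
    -- the curvature: ∂_M² = (p⁴ + q⁴) ⊗ 1:
    (hcurv : ∀ x z : G,
        (∑ y : G, mulAP (d x y) (d y z)) =
          if x = z then
            Finsupp.single ((idem x, (4 : ℤ)) : PathB) (1 : ZMod 2)
              + Finsupp.single ((idem x, (-4 : ℤ)) : PathB) (1 : ZMod 2)
          else 0) :
    -- the Maurer–Cartan equation for `𝓛(M)`, entrywise (the sum stabilises for N ≥ 4):
    ∀ gg : Idx G, gg.1.1 = idem gg.2 →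
      ∀ (gg' : Idx G) (N : ℕ), 4 ≤ N →
        ∑ k ∈ Finset.Icc 1 N, MCterm mu (deltaRow d) k gg gg' = 0 :=
  stmt15_general mu hmu G idem d hcurv
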